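/- Fix an integer d ≥ 2, θ > 0, and P_{12},…,P_{1d} > 0 (the first row of a d×d row-stochastic mutation matrix). Define H : ℝ^{d−1} × ℕ^d → ℝ by H(z, n) = ( ∏_{i=2}^d Γ(θP_{1i})/Γ(θP_{1i} + n_i) ) ∏_{i=2}^d z_i^{n_i}, where z = (z_2,…,z_d). For h : ℤ^d → ℝ define the generator of the fast limiting ancestral process by (𝒢h)(n) = ∑_{i=2,…,d : n_i ≥ 1} (1/2)·(n_i(n_i−1)/(n_i − 1 + θP_{1i}))·[h(n − e_i) − h(n)] + ∑_{i=2,…,d : n_i ≥ 1} (1/2)·(n_i θP_{1i}/(n_i − 1 + θP_{1i}))·[h(n − e_i + e_1) − h(n)], and for twice differentiable g : ℝ^{d−1} → ℝ define the generator of the limiting CBI process by (L̃_0 g)(z) = (1/2) ∑_{i=2}^d z_i ∂²g/∂z_i²(z) + ∑_{i=2}^d (1/2)(θP_{1i} − z_i) ∂g/∂z_i(z). Then for every n ∈ ℕ^d and every z ∈ ℝ^{d−1}: 𝒢(H(z, ·))(n) = L̃_0(H(·, n))(z). (This is the generator-level duality between the limiting CBI diffusion and the fast limiting ancestral process with respect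 to the duality function H, which is the content of the asymptotic duality theorem.) -/

import Mathlib

/-!
Write `a_i = θP_{1i}`, `C(n) = ∏ Γ(a_i)/Γ(a_i + n_i)` and `k = n` (as natural numbers), so that
`H(z, n) = C(n) z^k`. Both generators act coordinatewise, and both `i`-th terms equal
`(1/2) n_i C(n) ((a_i + n_i - 1) z^(k - e_i) - z^k)`. On the ancestral side this is
`Γ(x + 1) = x Γ(x)`, which gives `C(n - e_i) = (a_i + n_i - 1) C(n)`, together with the fact that
`H` ignores the first coordinate, so the two jump rates add up to `n_i`. On the diffusion side it
is the differentiation of a monomial together with `z_i z^(k - e_i) = z^k`.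
-/

open Finset

noncomputable section

/-- The `i`-th standard unit vector of `ℤ^d`. -/
def stdE {d : ℕ} (i : Fin d) : Fin d → ℤ := fun j => if j = i then 1 else 0

/-- Partial derivative `∂g/∂z_i(z)` of `g : ℝ^d → ℝ`. -/
def pd {d : ℕ} (g : (Fin d → ℝ) → ℝ) (z : Fin d → ℝ) (i : Fin d) : ℝ :=
  fderiv ℝ g z (Pi.single i 1)

/-- Second partial derivative `∂²g/∂z_i∂z_j(z)` of `g : ℝ^d → ℝ`. -/
def pd2 {d : ℕ} (g : (Fin d → ℝ) → ℝ) (z : Fin d → ℝ) (i j : Fin d) : ℝ :=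
  fderiv ℝ (fun y => fderiv ℝ g y (Pi.single j 1)) z (Pi.single i 1)

section Monomial

variable {ι : Type*} [DecidableEq ι] (s : Finset ι) (k : ι → ℕ)

theorem hasFDerivAt_const_mul_prod_pow [Fintype ι] (c : ℝ) (y : ι → ℝ) :
    HasFDerivAt (fun w : ι → ℝ => c * ∏ j ∈ s, w j ^ k j)
      (c • ∑ j ∈ s, (∏ l ∈ s.erase j, y l ^ k l) •
        ((k j * y j ^ (k j - 1)) •
          ContinuousLinearMap.proj (R := ℝ) (φ := fun _ => ℝ) j)) y :=
  (HasFDerivAt.finsetProd fun j _ => (hasDerivAt_pow (k j) (y j)).comp_hasFDerivAt y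
    (hasFDerivAt_apply j y)).const_mul c

theorem prod_erase_pow_update (i : ι) (m : ℕ) (y : ι → ℝ) :
    ∏ j ∈ s.erase i, y j ^ Function.update k i m j = ∏ j ∈ s.erase i, y j ^ k j :=
  prod_congr rfl fun j hj => by rw [Function.update_of_ne (ne_of_mem_erase hj)]

theorem mul_prod_pow_update {i : ι} (hi : i ∈ s) {m : ℕ} (hk : k i = m + 1) (y : ι → ℝ) :
    y i * ∏ j ∈ s, y j ^ Function.update k i m j = ∏ j ∈ s, y j ^ k j := by
  rw [← mul_prod_erase s _ hi, ← mul_prod_erase s _ hi, Function.update_self, hk,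
    prod_erase_pow_update]
  ring

end Monomial

section PartialDerivatives

variable {d : ℕ} (s : Finset (Fin d)) (c : ℝ) (k : Fin d → ℕ) {i : Fin d}

theorem pd_const_mul_prod_pow (hi : i ∈ s) (z : Fin d → ℝ) :
    pd (fun w => c * ∏ j ∈ s, w j ^ k j) z i
      = c * k i * ∏ j ∈ s, z j ^ Function.update k i (k i - 1) j := by
  rw [pd, (hasFDerivAt_const_mul_prod_pow s k c z).fderiv]
  simp only [smul_apply, FunLike.coe_sum, Finset.sum_apply,
    ContinuousLinearMap.proj_apply, Pi.single_apply, smul_eq_mul, mul_ite, mul_one, mul_zero,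
    sum_ite_eq', if_pos hi]
  rw [← mul_prod_erase s _ hi, Function.update_self, prod_erase_pow_update]
  ring

theorem pd2_const_mul_prod_pow (hi : i ∈ s) (z : Fin d → ℝ) :
    pd2 (fun w => c * ∏ j ∈ s, w j ^ k j) z i i
      = c * k i * (k i - 1 : ℕ) * ∏ j ∈ s, z j ^ Function.update k i (k i - 1 - 1) j := by
  have hpd : (fun y => pd (fun w => c * ∏ j ∈ s, w j ^ k j) y i)
      = fun y => (c * k i) * ∏ j ∈ s, y j ^ Function.update k i (k i - 1) j :=
    funext (pd_const_mul_prod_pow s c k hi)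
  change pd (fun y => pd (fun w => c * ∏ j ∈ s, w j ^ k j) y i) z i = _
  rw [hpd, pd_const_mul_prod_pow _ _ _ hi, Function.update_self, Function.update_idem]

theorem cbiGenerator_term_const_mul_prod_pow (a : ℝ) (hi : i ∈ s) (z : Fin d → ℝ) :
    1 / 2 * (z i * pd2 (fun w => c * ∏ j ∈ s, w j ^ k j) z i i)
        + 1 / 2 * (a - z i) * pd (fun w => c * ∏ j ∈ s, w j ^ k j) z i
      = 1 / 2 * k i * c * ((a + k i - 1) * ∏ j ∈ s, z j ^ Function.update k i (k i - 1) j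
          - ∏ j ∈ s, z j ^ k j) := by
  rw [pd2_const_mul_prod_pow s c k hi, pd_const_mul_prod_pow s c k hi]
  cases hk : k i with
  | zero => simp
  | succ K =>
    have hlower : z i * ∏ j ∈ s, z j ^ Function.update k i K j = ∏ j ∈ s, z j ^ k j :=
      mul_prod_pow_update s k hi hk z
    have hlower' : (K : ℝ) * (z i * ∏ j ∈ s, z j ^ Function.update k i (K - 1) j)
        = K * ∏ j ∈ s, z j ^ Function.update k i K j := by
      cases K with
      | zero => simp
      | succ K =>
        rw [Nat.add_sub_cancel, ← Function.update_idem (K + 1) K k (a := i),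
          mul_prod_pow_update s _ hi (Function.update_self ..) z]
    simp only [Nat.add_sub_cancel]
    push_cast
    linear_combination (1 / 2 * c * (K + 1)) * hlower' - (1 / 2 * c * (K + 1)) * hlower

end PartialDerivatives

theorem div_Gamma_eq_mul_div_Gamma_add_one (c : ℝ) {x : ℝ} (hx : x ≠ 0) :
    c / Real.Gamma x = x * (c / Real.Gamma (x + 1)) := by
  rw [Real.Gamma_add_one hx, ← mul_div_assoc, mul_div_mul_left _ _ hx]

section Duality

variable {d : ℕ} (a : Fin d → ℝ) (s : Finset (Fin d)) {i j : Fin d}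

@[simp]
theorem stdE_apply_self (i : Fin d) : stdE i i = 1 := if_pos rfl

@[simp]
theorem stdE_apply_of_ne (h : j ≠ i) : stdE i j = 0 := if_neg h

theorem toNat_sub_stdE_apply (m : Fin d → ℤ) (i j : Fin d) :
    ((m - stdE i) j).toNat = Function.update (fun l => (m l).toNat) i ((m i).toNat - 1) j := by
  rcases eq_or_ne j i with rfl | hji
  · simp only [Pi.sub_apply, stdE_apply_self, Function.update_self]
    omega
  · simp [hji]

/-- The paper's `1/γ_0(m)`. -/
def gammaCoeff (m : Fin d → ℤ) : ℝ :=
  ∏ i ∈ s, Real.Gamma (a i) / Real.Gamma (a i + m i)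

def dualityFn (z : Fin d → ℝ) (m : Fin d → ℤ) : ℝ :=
  gammaCoeff a s m * ∏ i ∈ s, z i ^ (m i).toNat

theorem gammaCoeff_sub_stdE (hi : i ∈ s) {m : Fin d → ℤ} (hm : a i + m i - 1 ≠ 0) :
    gammaCoeff a s (m - stdE i) = (a i + m i - 1) * gammaCoeff a s m := by
  have hshift : Real.Gamma (a i) / Real.Gamma (a i + ((m - stdE i) i : ℤ))
      = (a i + m i - 1) * (Real.Gamma (a i) / Real.Gamma (a i + m i)) := by
    have hcast : (((m - stdE i) i : ℤ) : ℝ) = m i - 1 := by simp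
    rw [hcast, ← add_sub_assoc, div_Gamma_eq_mul_div_Gamma_add_one _ hm, sub_add_cancel]
  rw [gammaCoeff, gammaCoeff, ← mul_prod_erase s _ hi, ← mul_prod_erase s _ hi, hshift,
    prod_congr rfl fun l hl => by
      rw [Pi.sub_apply, stdE_apply_of_ne (ne_of_mem_erase hl), sub_zero]]
  ring

theorem dualityFn_sub_stdE (hi : i ∈ s) (z : Fin d → ℝ) {m : Fin d → ℤ}
    (hm : a i + m i - 1 ≠ 0) :
    dualityFn a s z (m - stdE i) = (a i + m i - 1) * gammaCoeff a s m
      * ∏ l ∈ s, z l ^ Function.update (fun l => (m l).toNat) i ((m i).toNat - 1) l := by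
  simp only [dualityFn, gammaCoeff_sub_stdE a s hi hm, toNat_sub_stdE_apply]

theorem dualityFn_add_stdE_of_notMem (hj : j ∉ s) (z : Fin d → ℝ) (m : Fin d → ℤ) :
    dualityFn a s z (m + stdE j) = dualityFn a s z m := by
  have hm : ∀ l ∈ s, (m + stdE j) l = m l := fun l hl => by
    rw [Pi.add_apply, stdE_apply_of_ne (ne_of_mem_of_not_mem hl hj), add_zero]
  simp only [dualityFn, gammaCoeff]
  congr 1 <;> exact prod_congr rfl fun l hl => by rw [hm l hl]

theorem ancestralGenerator_term_dualityFn (hi : i ∈ s) (hj : j ∉ s) (ha : 0 < a i)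
    (z : Fin d → ℝ) (m : Fin d → ℤ) :
    (if 1 ≤ m i then
        1 / 2 * ((m i : ℝ) * ((m i : ℝ) - 1) / ((m i : ℝ) - 1 + a i))
            * (dualityFn a s z (m - stdE i) - dualityFn a s z m)
          + 1 / 2 * ((m i : ℝ) * a i / ((m i : ℝ) - 1 + a i))
            * (dualityFn a s z (m - stdE i + stdE j) - dualityFn a s z m)
      else 0)
      = 1 / 2 * (m i).toNat * gammaCoeff a s m
          * ((a i + (m i).toNat - 1)
              * ∏ l ∈ s, z l ^ Function.update (fun l => (m l).toNat) i ((m i).toNat - 1) l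
            - ∏ l ∈ s, z l ^ (m l).toNat) := by
  split_ifs with hm
  · have hcast : ((m i).toNat : ℝ) = m i := by exact_mod_cast Int.toNat_of_nonneg (by omega)
    have hpos : 0 < (m i : ℝ) - 1 + a i := by
      have : (1 : ℝ) ≤ m i := by exact_mod_cast hm
      linarith
    rw [dualityFn_add_stdE_of_notMem a s hj, dualityFn_sub_stdE a s hi z (by linarith), hcast,
      dualityFn]
    field_simp
  · rw [show (m i).toNat = 0 by omega]
    simp

end Duality

/-- Allele `1` is the index `0 : Fin (d + 2)`; the variables `z_2,…,z_d` are the coordinates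
`z i`, `i ≠ 0`, of `z : Fin (d + 2) → ℝ`. -/
theorem generator_duality_general {d : ℕ} (θ : ℝ) (hθ : 0 < θ)
    (P1 : Fin (d + 2) → ℝ) (hP1 : ∀ i : Fin (d + 2), i ≠ 0 → 0 < P1 i)
    (H : (Fin (d + 2) → ℝ) → (Fin (d + 2) → ℤ) → ℝ)
    (hH : ∀ z m, H z m =
      (∏ i ∈ univ.erase 0, Real.Gamma (θ * P1 i) / Real.Gamma (θ * P1 i + (m i : ℝ)))
        * ∏ i ∈ univ.erase 0, z i ^ (m i).toNat)
    (G : ((Fin (d + 2) → ℤ) → ℝ) → (Fin (d + 2) → ℤ) → ℝ)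
    (hG : ∀ h m, G h m =
      (∑ i ∈ (univ.erase 0).filter (fun i => 1 ≤ m i),
        (1 / 2) * ((m i : ℝ) * ((m i : ℝ) - 1) / ((m i : ℝ) - 1 + θ * P1 i))
          * (h (m - stdE i) - h m))
      + ∑ i ∈ (univ.erase 0).filter (fun i => 1 ≤ m i),
          (1 / 2) * ((m i : ℝ) * (θ * P1 i) / ((m i : ℝ) - 1 + θ * P1 i))
            * (h (m - stdE i + stdE 0) - h m))
    (L₀ : ((Fin (d + 2) → ℝ) → ℝ) → (Fin (d + 2) → ℝ) → ℝ)
    (hL₀ : ∀ g z, L₀ g z =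
      (1 / 2) * (∑ i ∈ univ.erase 0, z i * pd2 g z i i)
        + ∑ i ∈ univ.erase 0, (1 / 2) * (θ * P1 i - z i) * pd g z i)
    (n : Fin (d + 2) → ℤ) (z : Fin (d + 2) → ℝ) :
    G (fun m => H z m) n = L₀ (fun w => H w n) z := by
  obtain rfl : H = dualityFn (fun i => θ * P1 i) (univ.erase 0) := funext₂ hH
  rw [hG, hL₀, ← sum_add_distrib, mul_sum, ← sum_add_distrib, sum_filter]
  refine sum_congr rfl fun i hi => ?_
  have ha : 0 < θ * P1 i := mul_pos hθ (hP1 i (ne_of_mem_erase hi))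
  exact (ancestralGenerator_term_dualityFn (fun l => θ * P1 l) _ hi (notMem_erase 0 univ) ha z
    n).trans
    (cbiGenerator_term_const_mul_prod_pow _ _ (fun l => (n l).toNat) _ hi z).symm

/-- **Theorem 6.1 (generator-level asymptotic duality)**: with the duality function
`H(z,n) = (∏_{i=2}^d Γ(θP_{1i})/Γ(θP_{1i}+n_i)) ∏_{i=2}^d z_i^{n_i}`, the generator
`𝒢` of the fast limiting ancestral process
`(𝒢h)(n) = ∑_{i≥2, n_i≥1} (1/2)(n_i(n_i-1)/(n_i-1+θP_{1i}))[h(n-e_i)-h(n)]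
+ ∑_{i≥2, n_i≥1} (1/2)(n_iθP_{1i}/(n_i-1+θP_{1i}))[h(n-e_i+e_1)-h(n)]`
and the generator `L̃₀` of the limiting CBI process
`(L̃₀g)(z) = (1/2)∑_{i=2}^d z_i ∂²g/∂z_i²(z) + ∑_{i=2}^d (1/2)(θP_{1i}-z_i)∂g/∂z_i(z)`
satisfy `𝒢(H(z,·))(n) = L̃₀(H(·,n))(z)` for every `n ∈ ℕ^d` and every `z`.
(Allele `1` is represented by the index `0 : Fin (d+2)`; the variables `z_2,…,z_d` are
the coordinates `z i`, `i ≠ 0`, of `z : Fin (d+2) → ℝ`.) -/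
theorem generator_duality {d : ℕ} (θ : ℝ) (hθ : 0 < θ)
    (P1 : Fin (d + 2) → ℝ) (hP1 : ∀ i : Fin (d + 2), i ≠ 0 → 0 < P1 i)
    (H : (Fin (d + 2) → ℝ) → (Fin (d + 2) → ℤ) → ℝ)
    (hH : ∀ z m, H z m =
      (∏ i ∈ univ.erase 0, Real.Gamma (θ * P1 i) / Real.Gamma (θ * P1 i + (m i : ℝ)))
        * ∏ i ∈ univ.erase 0, z i ^ (m i).toNat)
    (G : ((Fin (d + 2) → ℤ) → ℝ) → (Fin (d + 2) → ℤ) → ℝ)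
    (hG : ∀ h m, G h m =
      (∑ i ∈ (univ.erase 0).filter (fun i => 1 ≤ m i),
        (1 / 2) * ((m i : ℝ) * ((m i : ℝ) - 1) / ((m i : ℝ) - 1 + θ * P1 i))
          * (h (m - stdE i) - h m))
      + ∑ i ∈ (univ.erase 0).filter (fun i => 1 ≤ m i),
          (1 / 2) * ((m i : ℝ) * (θ * P1 i) / ((m i : ℝ) - 1 + θ * P1 i))
            * (h (m - stdE i + stdE 0) - h m))
    (L₀ : ((Fin (d + 2) → ℝ) → ℝ) → (Fin (d + 2) → ℝ) → ℝ)
    (hL₀ : ∀ g z, L₀ g z =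
      (1 / 2) * (∑ i ∈ univ.erase 0, z i * pd2 g z i i)
        + ∑ i ∈ univ.erase 0, (1 / 2) * (θ * P1 i - z i) * pd g z i)
    (n : Fin (d + 2) → ℤ) (hn : ∀ i, 0 ≤ n i) (z : Fin (d + 2) → ℝ) :
    G (fun m => H z m) n = L₀ (fun w => H w n) z :=
  generator_duality_general θ hθ P1 hP1 H hH G hG L₀ hL₀ n z
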